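/- For coprime positive integers a and c, the Dedekind sums satisfy the reciprocity law s(a,c) + s(c,a) = (1/12)(a/c + 1/(ac) + c/a) - 1/4. -/

import Mathlib

/-- The sawtooth function `((x))`. -/
noncomputable def saw (x : ℝ) : ℝ :=
  open Classical in
  if ∃ n : ℤ, (n : ℝ) = x then 0 else x - ⌊x⌋ - 1/2

/-- The Dedekind sum `s(a,c) = ∑_{k=1}^{c-1} ((k/c))((ak/c))`. -/
noncomputable def dsum (a c : ℤ) : ℝ :=
  ∑ k ∈ Finset.Ico 1 c.toNat, saw ((k : ℝ) / c) * saw ((a : ℝ) * k / c)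

/-!
For `0 < k < c` the sawtooth values in `s(a,c)` are `k/c - 1/2` and `r_k/c - 1/2`, where
`a k = c q_k + r_k` with `0 < r_k < c`, and `k ↦ r_k` permutes `[1, c)`. Invariance of the power
sums `∑ k` and `∑ k²` under this permutation expresses `12 a c · s(a,c)` through `∑ q_k²` alone.
Reciprocity then reduces to an identity for `c ∑ q_k² + a ∑ ⌊c j / a⌋²`, obtained by counting the
lattice points `(j, k)` of `[1, a) × [1, c)`, weighted by `2 j`, on either side of the diagonal
`j c = a k`, which by coprimality contains none of them.
-/

open Finset

theorem saw_natCast_div {p c : ℕ} (hc : 0 < c) (hp : ¬ c ∣ p) :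
    saw (p / c) = (p % c : ℕ) / c - 1 / 2 := by
  have hfract : Int.fract ((p : ℝ) / c) = (p % c : ℕ) / c :=
    Int.fract_div_natCast_eq_div_natCast_mod
  have hint : ¬ ∃ n : ℤ, (n : ℝ) = p / c := by
    rintro ⟨n, hn⟩
    have hpos : (0 : ℝ) < (p % c : ℕ) / c := by
      have := Nat.emod_pos_of_not_dvd hp
      positivity
    rw [← hfract, ← hn, Int.fract_intCast] at hpos
    exact hpos.false
  rw [saw, if_neg hint, ← hfract]
  rfl

theorem dsum_natCast (a c : ℕ) :
    dsum a c = ∑ k ∈ Ico 1 c, saw (k / c) * saw (a * k / c) := by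
  simp [dsum]

theorem Nat.Coprime.not_dvd_mul_of_mem_Ico {a c k : ℕ} (h : a.Coprime c) (hk : k ∈ Ico 1 c) :
    ¬ c ∣ a * k := by
  rw [mem_Ico] at hk
  exact fun hdvd => absurd (Nat.le_of_dvd hk.1 (h.symm.dvd_of_dvd_mul_left hdvd)) (by omega)

theorem Nat.Coprime.sum_Ico_mul_mod {M : Type*} [AddCommMonoid M] {a c : ℕ} (h : a.Coprime c)
    (f : ℕ → M) : ∑ k ∈ Ico 1 c, f (a * k % c) = ∑ k ∈ Ico 1 c, f k := by
  have hmaps : Set.MapsTo (a * · % c) (Ico 1 c : Set ℕ) (Ico 1 c) := by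
    intro k hk
    have hpos := Nat.emod_pos_of_not_dvd (h.not_dvd_mul_of_mem_Ico hk)
    simp only [coe_Ico, Set.mem_Ico] at hk ⊢
    exact ⟨hpos, Nat.mod_lt _ (by omega)⟩
  have hinj : Set.InjOn (a * · % c) (Ico 1 c : Set ℕ) := by
    intro k hk k' hk' hkk'
    simp only [coe_Ico, Set.mem_Ico] at hk hk'
    exact (Nat.ModEq.cancel_left_of_coprime h.symm hkk').eq_of_lt_of_lt hk.2 hk'.2
  exact sum_nbij _ hmaps hinj (surjOn_of_injOn_of_card_le _ hmaps hinj le_rfl) fun _ _ => rfl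

theorem Nat.Coprime.dsum_eq_sum_mod {a c : ℕ} (h : a.Coprime c) :
    dsum a c = ∑ k ∈ Ico 1 c, ((k : ℝ) / c - 1 / 2) * ((a * k % c : ℕ) / c - 1 / 2) := by
  rw [dsum_natCast]
  refine sum_congr rfl fun k hk => ?_
  have hc : 0 < c := by simp only [mem_Ico] at hk; omega
  have hkc : k % c = k := Nat.mod_eq_of_lt (mem_Ico.1 hk).2
  have hkdvd : ¬ c ∣ k := Nat.not_dvd_of_pos_of_lt (mem_Ico.1 hk).1 (mem_Ico.1 hk).2
  rw [saw_natCast_div hc hkdvd, hkc, ← Nat.cast_mul,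
    saw_natCast_div hc (h.not_dvd_mul_of_mem_Ico hk)]

theorem filter_Ico_mul_lt_eq_Icc {a c k : ℕ} (hk : k < c) (hdvd : ¬ c ∣ a * k) :
    {j ∈ Ico 1 a | j * c < a * k} = Icc 1 (a * k / c) := by
  ext j
  have hne : j * c ≠ a * k := fun heq => hdvd ⟨j, by rw [← heq, mul_comm]⟩
  simp only [mem_filter, mem_Ico, mem_Icc, Nat.le_div_iff_mul_le (show 0 < c by omega)]
  constructor
  · rintro ⟨⟨hj1, -⟩, hjk⟩
    exact ⟨hj1, hjk.le⟩
  · rintro ⟨hj1, hjk⟩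
    have hjk := lt_of_le_of_ne hjk hne
    exact ⟨⟨hj1, Nat.lt_of_mul_lt_mul_right (hjk.trans_le (Nat.mul_le_mul_left a hk.le))⟩, hjk⟩

theorem Nat.Coprime.sum_sum_Icc_mul_div_add_sum_mul_div_smul {M : Type*} [AddCommMonoid M]
    {a c : ℕ} (h : a.Coprime c) (f : ℕ → M) :
    ∑ k ∈ Ico 1 c, ∑ j ∈ Icc 1 (a * k / c), f j + ∑ j ∈ Ico 1 a, (c * j / a) • f j =
      (c - 1) • ∑ j ∈ Ico 1 a, f j := by
  have below : ∑ k ∈ Ico 1 c, ∑ j ∈ Icc 1 (a * k / c), f j =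
      ∑ j ∈ Ico 1 a, ∑ k ∈ Ico 1 c with j * c < a * k, f j :=
    calc ∑ k ∈ Ico 1 c, ∑ j ∈ Icc 1 (a * k / c), f j
        = ∑ k ∈ Ico 1 c, ∑ j ∈ Ico 1 a with j * c < a * k, f j := sum_congr rfl fun k hk => by
          rw [filter_Ico_mul_lt_eq_Icc (mem_Ico.1 hk).2 (h.not_dvd_mul_of_mem_Ico hk)]
      _ = ∑ j ∈ Ico 1 a, ∑ k ∈ Ico 1 c with j * c < a * k, f j :=
          sum_comm' fun k j => by simp only [mem_filter]; tauto
  have above : ∀ j ∈ Ico 1 a, (c * j / a) • f j = ∑ k ∈ Ico 1 c with ¬ j * c < a * k, f j := by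
    intro j hj
    have hdvd := h.symm.not_dvd_mul_of_mem_Ico hj
    have hfilter : {k ∈ Ico 1 c | ¬ j * c < a * k} = {k ∈ Ico 1 c | k * a < c * j} := by
      refine filter_congr fun k _ => ?_
      have hne : j * c ≠ a * k := fun heq => hdvd ⟨k, by rw [mul_comm c j, heq]⟩
      rw [mul_comm k a, mul_comm c j]
      omega
    rw [hfilter, filter_Ico_mul_lt_eq_Icc (mem_Ico.1 hj).2 hdvd, sum_const, Nat.card_Icc,
      Nat.add_sub_cancel]
  rw [below, sum_congr rfl above, ← sum_add_distrib, smul_sum]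
  exact sum_congr rfl fun j _ => by rw [sum_filter_add_sum_filter_not, sum_const, Nat.card_Ico]

section CommRing

variable {R : Type*} [CommRing R]

theorem sum_Ico_one_natCast_mul_two (n : ℕ) : (∑ k ∈ Ico 1 n, (k : R)) * 2 = n * (n - 1) := by
  induction n with
  | zero => simp
  | succ n ih =>
    rcases n.eq_zero_or_pos with rfl | hn
    · simp
    · rw [sum_Ico_succ_top hn, add_mul, ih]
      push_cast
      ring

theorem sum_Ico_one_natCast_sq_mul_six (n : ℕ) :
    (∑ k ∈ Ico 1 n, (k : R) ^ 2) * 6 = n * (n - 1) * (2 * n - 1) := by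
  induction n with
  | zero => simp
  | succ n ih =>
    rcases n.eq_zero_or_pos with rfl | hn
    · simp
    · rw [sum_Ico_succ_top hn, add_mul, ih]
      push_cast
      ring

variable (R) in
theorem natCast_mul_eq_mul_div_add_mod (a c k : ℕ) :
    (a * k : R) = c * ((a * k / c : ℕ) : R) + ((a * k % c : ℕ) : R) := by
  rw [← Nat.cast_mul, ← Nat.cast_mul, ← Nat.cast_add, Nat.div_add_mod]

theorem Nat.Coprime.mul_sum_Ico_mul_div {a c : ℕ} (h : a.Coprime c) :
    c * ∑ k ∈ Ico 1 c, ((a * k / c : ℕ) : R) = (a - 1) * ∑ k ∈ Ico 1 c, (k : R) :=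
  calc c * ∑ k ∈ Ico 1 c, ((a * k / c : ℕ) : R)
      = ∑ k ∈ Ico 1 c, ((a : R) * k - ((a * k % c : ℕ) : R)) := by
        rw [mul_sum]
        exact sum_congr rfl fun k _ => by
          linear_combination -natCast_mul_eq_mul_div_add_mod R a c k
    _ = (a - 1) * ∑ k ∈ Ico 1 c, (k : R) := by
        rw [sum_sub_distrib, h.sum_Ico_mul_mod (fun m => (m : R)), ← mul_sum]
        ring

theorem Nat.Coprime.two_mul_sum_Ico_mul_mul_div {a c : ℕ} (h : a.Coprime c) :
    2 * a * c * ∑ k ∈ Ico 1 c, (k : R) * ((a * k / c : ℕ) : R) =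
      (a ^ 2 - 1) * ∑ k ∈ Ico 1 c, (k : R) ^ 2
        + c ^ 2 * ∑ k ∈ Ico 1 c, ((a * k / c : ℕ) : R) ^ 2 :=
  calc 2 * a * c * ∑ k ∈ Ico 1 c, (k : R) * ((a * k / c : ℕ) : R)
      = ∑ k ∈ Ico 1 c, ((a : R) ^ 2 * k ^ 2 + c ^ 2 * ((a * k / c : ℕ) : R) ^ 2
          - ((a * k % c : ℕ) : R) ^ 2) := by
        rw [mul_sum]
        refine sum_congr rfl fun k _ => ?_
        have hk := natCast_mul_eq_mul_div_add_mod R a c k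
        linear_combination (-(a * k - c * ((a * k / c : ℕ) : R) + ((a * k % c : ℕ) : R))) * hk
    _ = _ := by
        rw [sum_sub_distrib, sum_add_distrib, h.sum_Ico_mul_mod (fun m => (m : R) ^ 2), ← mul_sum,
          ← mul_sum]
        ring

end CommRing

theorem Nat.Coprime.twelve_mul_mul_dsum {a c : ℕ} (hc : 0 < c) (h : a.Coprime c) :
    12 * a * c * dsum a c = (a ^ 2 + 1) * (c - 1) * (2 * c - 1) - 3 * a * c * (c - 1)
      - 6 * c * ∑ k ∈ Ico 1 c, ((a * k / c : ℕ) : ℝ) ^ 2 := by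
  have hc0 : (c : ℝ) ≠ 0 := by positivity
  have hexpand : c ^ 2 * dsum a c = a * ∑ k ∈ Ico 1 c, (k : ℝ) ^ 2
      - c * ∑ k ∈ Ico 1 c, (k : ℝ) * ((a * k / c : ℕ) : ℝ)
      - c * (a + 1) / 2 * ∑ k ∈ Ico 1 c, (k : ℝ)
      + c ^ 2 / 2 * ∑ k ∈ Ico 1 c, ((a * k / c : ℕ) : ℝ) + c ^ 2 / 4 * (c - 1) := by
    have hterm : ∀ k ∈ Ico 1 c,
        (c : ℝ) ^ 2 * (((k : ℝ) / c - 1 / 2) * ((a * k % c : ℕ) / c - 1 / 2)) =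
          a * k ^ 2 - c * (k * ((a * k / c : ℕ) : ℝ)) - c * (a + 1) / 2 * k
            + c ^ 2 / 2 * ((a * k / c : ℕ) : ℝ) + c ^ 2 / 4 := fun k _ =>
      calc (c : ℝ) ^ 2 * (((k : ℝ) / c - 1 / 2) * ((a * k % c : ℕ) / c - 1 / 2))
          = (k - c / 2) * ((a * k % c : ℕ) - c / 2) := by field_simp
        _ = _ := by linear_combination (c / 2 - k) * natCast_mul_eq_mul_div_add_mod ℝ a c k
    rw [h.dsum_eq_sum_mod, mul_sum, sum_congr rfl hterm]
    simp only [sum_add_distrib, sum_sub_distrib, ← mul_sum, sum_const, Nat.card_Ico, nsmul_eq_mul,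
      Nat.cast_sub hc, Nat.cast_one]
    ring
  apply mul_left_cancel₀ hc0
  linear_combination 12 * a * hexpand - 6 * h.two_mul_sum_Ico_mul_mul_div (R := ℝ)
    + 6 * a * c * h.mul_sum_Ico_mul_div (R := ℝ)
    - 6 * a * c * sum_Ico_one_natCast_mul_two (R := ℝ) c
    + (a ^ 2 + 1) * sum_Ico_one_natCast_sq_mul_six (R := ℝ) c

theorem Nat.Coprime.sum_sq_div_reciprocity {a c : ℕ} (ha : 0 < a) (hc : 0 < c)
    (h : a.Coprime c) :
    6 * (c * ∑ k ∈ Ico 1 c, ((a * k / c : ℕ) : ℝ) ^ 2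
        + a * ∑ j ∈ Ico 1 a, ((c * j / a : ℕ) : ℝ) ^ 2) =
      (a - 1) * (c - 1) * (4 * a * c - 2 * a - 2 * c + 1) := by
  have hgauss : ∀ q : ℕ, ∑ j ∈ Icc 1 q, (2 * j : ℝ) = q ^ 2 + q := fun q => by
    rw [← Ico_add_one_right_eq_Icc, ← mul_sum, mul_comm, sum_Ico_one_natCast_mul_two]
    push_cast
    ring
  have habove : ∑ j ∈ Ico 1 a, (c * j / a) • (2 * j : ℝ) =
      2 * ∑ j ∈ Ico 1 a, (j : ℝ) * ((c * j / a : ℕ) : ℝ) := by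
    rw [mul_sum]
    exact sum_congr rfl fun j _ => by rw [nsmul_eq_mul]; ring
  have hcount := h.sum_sum_Icc_mul_div_add_sum_mul_div_smul fun j => (2 * j : ℝ)
  rw [sum_congr rfl fun k _ => hgauss _, sum_add_distrib, habove, nsmul_eq_mul, ← mul_sum,
    Nat.cast_pred hc] at hcount
  apply mul_left_cancel₀ (by positivity : (a : ℝ) ≠ 0)
  linear_combination 6 * a * c * hcount - 6 * a * h.mul_sum_Ico_mul_div (R := ℝ)
    - 6 * h.symm.two_mul_sum_Ico_mul_mul_div (R := ℝ)
    + 6 * a * c * (c - 1) * sum_Ico_one_natCast_mul_two (R := ℝ) a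
    - 3 * a * (a - 1) * sum_Ico_one_natCast_mul_two (R := ℝ) c
    - (c ^ 2 - 1) * sum_Ico_one_natCast_sq_mul_six (R := ℝ) a

theorem dedekind_reciprocity (a c : ℤ) (ha : 0 < a) (hc : 0 < c) (h : IsCoprime a c) :
    dsum a c + dsum c a =
      (1/12) * ((a : ℝ)/c + 1/((a : ℝ)*c) + (c : ℝ)/a) - 1/4 := by
  lift a to ℕ using ha.le
  lift c to ℕ using hc.le
  rw [Nat.isCoprime_iff_coprime] at h
  replace ha : 0 < a := by exact_mod_cast ha
  replace hc : 0 < c := by exact_mod_cast hc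
  have hac := h.twelve_mul_mul_dsum hc
  have hca := h.symm.twelve_mul_mul_dsum ha
  have hfloor := h.sum_sq_div_reciprocity ha hc
  simp only [Int.cast_natCast]
  field_simp
  linear_combination 4 * hac + 4 * hca - 4 * hfloor
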